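/- arXiv:1407.0513 — 6 statements merged into one kernel-verified Lean document; each statement's English description precedes it below -/
import Mathlib

section
/- Let (A,Δ) be a regular weak multiplier Hopf algebra with canonical idempotent E, and let u, v be invertible elements of M(B). Define u' = S_C^{-1}(u) and v' = S_B(v) in M(C), so that (u⊗1)E = (1⊗u')E and E(v⊗1) = E(1⊗v'). Then E(vu⊗1)E = E implies E(1⊗v'u')E = E; in particular, if u' and v' are each other's inverses in M(C), then E(vu⊗1)E = E holds, even when u and v are not each other's inverses. -/
noncomputable section
set_option maxHeartbeats 1000000

/-!
A regular weak multiplier Hopf algebra `(A, Δ)` over `ℂ` (in the sense of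
Van Daele and Wang), modelled inside multiplier algebras.  Here `M` plays the
role of the multiplier algebra `M(A)`, `M2` of `M(A ⊗ A)` and `M3` of
`M(A ⊗ A ⊗ A)`.  The algebra `A` is a nondegenerate two-sided ideal of `M`,
`tp x y` represents the multiplier `x ⊗ y`, `Δ` is the (canonical extension of
the) coproduct, `E = Δ(1)` is the canonical idempotent, `ε` the counit, `S` the
(bijective) antipode, `εs`/`εt` the source and target maps with images
`B = εs(A)` and `C = εt(A)`, whose multiplier algebras `M(B)`, `M(C)` are the
subalgebras `MB`, `MC` of `M(A)`.  `SB : B → C` and `SC : C → B` are the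
antipodal maps of the separability idempotent `E ∈ M(B ⊗ C)`.  Various
canonical maps (`T1, …, T4`), the leg maps `ι ⊗ S`, `S ⊗ ι`, … and the
contraction maps (multiplication composed with leg maps) are part of the data,
each characterized on the multipliers `tp x y`.
-/
structure WMHA (M M2 M3 : Type*) [Ring M] [Algebra ℂ M] [Ring M2] [Algebra ℂ M2]
    [Ring M3] [Algebra ℂ M3] where
  /-- the algebra `A`, a nondegenerate two-sided ideal in `M = M(A)` -/
  A : NonUnitalSubalgebra ℂ M
  idealL : ∀ x : M, ∀ a ∈ A, x * a ∈ A
  idealR : ∀ x : M, ∀ a ∈ A, a * x ∈ A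
  nondegL : ∀ x : M, (∀ a ∈ A, x * a = 0) → x = 0
  nondegR : ∀ x : M, (∀ a ∈ A, a * x = 0) → x = 0
  /-- `tp x y` is the multiplier `x ⊗ y` of `A ⊗ A` -/
  tp : M →ₗ[ℂ] M →ₗ[ℂ] M2
  tp_mul : ∀ x y z w : M, tp x y * tp z w = tp (x * z) (y * w)
  tp_one : tp 1 1 = 1
  /-- the subspace of `M2 = M(A ⊗ A)` playing the role of `A ⊗ A` -/
  AA : Submodule ℂ M2
  AA_eq : AA = Submodule.span ℂ (Set.image2 (fun x y => tp x y) (A : Set M) (A : Set M))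
  /-- the coproduct, canonically extended to `M(A)` -/
  Δ : M →ₗ[ℂ] M2
  Δ_mul : ∀ x y : M, Δ (x * y) = Δ x * Δ y
  /-- the canonical idempotent `E = Δ(1)` -/
  E : M2
  Δ_one : Δ 1 = E
  /-- the counit (extended to `M(A)`; only its values on `A` matter) -/
  ε : M →ₗ[ℂ] ℂ
  /-- the extension `ε ⊗ ι` -/
  ε1 : M2 →ₗ[ℂ] M
  ε1_tp : ∀ x y : M, ε1 (tp x y) = ε x • y
  /-- the extension `ι ⊗ ε` -/
  ε2 : M2 →ₗ[ℂ] M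
  ε2_tp : ∀ x y : M, ε2 (tp x y) = ε y • x
  counit1 : ∀ a ∈ A, ∀ b ∈ A, ε1 (Δ a * tp 1 b) = a * b
  counit2 : ∀ a ∈ A, ∀ c ∈ A, ε2 (tp c 1 * Δ a) = c * a
  /-- the antipode (extended to `M(A)`) and its inverse -/
  S : M →ₗ[ℂ] M
  Sinv : M →ₗ[ℂ] M
  S_antimul : ∀ x y : M, S (x * y) = S y * S x
  S_one : S 1 = 1
  Sinv_S : ∀ x : M, Sinv (S x) = x
  S_Sinv : ∀ x : M, S (Sinv x) = x
  S_A : ∀ a ∈ A, S a ∈ A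
  Sinv_A : ∀ a ∈ A, Sinv a ∈ A
  /-- contraction `x ⊗ y ↦ S(x) y` (multiplication after `S ⊗ ι`) -/
  mulS1 : M2 →ₗ[ℂ] M
  mulS1_tp : ∀ x y : M, mulS1 (tp x y) = S x * y
  /-- contraction `x ⊗ y ↦ x S(y)` (multiplication after `ι ⊗ S`) -/
  mulS2 : M2 →ₗ[ℂ] M
  mulS2_tp : ∀ x y : M, mulS2 (tp x y) = x * S y
  /-- the source map `ε_s(a) = Σ S(a₍₁₎) a₍₂₎` and target map
  `ε_t(a) = Σ a₍₁₎ S(a₍₂₎)` (extended to `M(A)`) -/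
  εs : M →ₗ[ℂ] M
  εt : M →ₗ[ℂ] M
  εs_char : ∀ a ∈ A, ∀ b ∈ A, εs a * b = mulS1 (Δ a * tp 1 b)
  εt_char : ∀ a ∈ A, ∀ b ∈ A, b * εt a = mulS2 (tp b 1 * Δ a)
  /-- the source algebra `B = ε_s(A)` and target algebra `C = ε_t(A)` -/
  B : NonUnitalSubalgebra ℂ M
  C : NonUnitalSubalgebra ℂ M
  B_eq : (B : Set M) = εs '' (A : Set M)
  C_eq : (C : Set M) = εt '' (A : Set M)
  /-- `M(B)` and `M(C)`, viewed as subalgebras of `M(A)` -/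
  MB : Subalgebra ℂ M
  MC : Subalgebra ℂ M
  B_le_MB : (B : Set M) ⊆ (MB : Set M)
  C_le_MC : (C : Set M) ⊆ (MC : Set M)
  MB_B : ∀ x ∈ MB, ∀ b ∈ B, x * b ∈ B ∧ b * x ∈ B
  MC_C : ∀ y ∈ MC, ∀ c ∈ C, y * c ∈ C ∧ c * y ∈ C
  /-- `B` and `C` commute inside `M(A)` -/
  commBC : ∀ x ∈ MB, ∀ y ∈ MC, x * y = y * x
  Δ_MB : ∀ x ∈ MB, Δ x = E * tp 1 x
  Δ_MB' : ∀ x ∈ MB, Δ x = tp 1 x * E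
  Δ_MC : ∀ y ∈ MC, Δ y = tp y 1 * E
  Δ_MC' : ∀ y ∈ MC, Δ y = E * tp y 1
  /-- the antipodal maps `S_B : M(B) → M(C)` and `S_C : M(C) → M(B)` of the
  separability idempotent `E`, together with their inverses -/
  SB : M →ₗ[ℂ] M
  SC : M →ₗ[ℂ] M
  SBinv : M →ₗ[ℂ] M
  SCinv : M →ₗ[ℂ] M
  SB_MB : ∀ x ∈ MB, SB x ∈ MC
  SC_MC : ∀ y ∈ MC, SC y ∈ MB
  SBinv_MC : ∀ y ∈ MC, SBinv y ∈ MB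
  SCinv_MB : ∀ x ∈ MB, SCinv x ∈ MC
  SB_B : ∀ x ∈ B, SB x ∈ C
  SC_C : ∀ y ∈ C, SC y ∈ B
  SB_antimul : ∀ x ∈ MB, ∀ x' ∈ MB, SB (x * x') = SB x' * SB x
  SC_antimul : ∀ y ∈ MC, ∀ y' ∈ MC, SC (y * y') = SC y' * SC y
  SBinv_antimul : ∀ y ∈ MC, ∀ y' ∈ MC, SBinv (y * y') = SBinv y' * SBinv y
  SCinv_antimul : ∀ x ∈ MB, ∀ x' ∈ MB, SCinv (x * x') = SCinv x' * SCinv x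
  SB_one : SB 1 = 1
  SC_one : SC 1 = 1
  SBinv_one : SBinv 1 = 1
  SCinv_one : SCinv 1 = 1
  SBinv_SB : ∀ x ∈ MB, SBinv (SB x) = x
  SB_SBinv : ∀ y ∈ MC, SB (SBinv y) = y
  SCinv_SC : ∀ y ∈ MC, SCinv (SC y) = y
  SC_SCinv : ∀ x ∈ MB, SC (SCinv x) = x
  SB_char : ∀ x ∈ MB, E * tp x 1 = E * tp 1 (SB x)
  SC_char : ∀ y ∈ MC, tp 1 y * E = tp (SC y) 1 * E
  /-- `S_B` and `S_C` are the restrictions of the antipode -/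
  SB_eq_S : ∀ x ∈ MB, SB x = S x
  SC_eq_S : ∀ y ∈ MC, SC y = S y
  /-- the subspace of `M2` playing the role of `B ⊗ C` -/
  BCt : Submodule ℂ M2
  BCt_eq : BCt = Submodule.span ℂ (Set.image2 (fun x y => tp x y) (B : Set M) (C : Set M))
  /-- `E` is a separability idempotent in `M(B ⊗ C)` … -/
  E_sep1 : ∀ b ∈ B, E * tp b 1 ∈ BCt
  E_sep2 : ∀ b ∈ B, tp b 1 * E ∈ BCt
  E_sep3 : ∀ c ∈ C, tp 1 c * E ∈ BCt
  E_sep4 : ∀ c ∈ C, E * tp 1 c ∈ BCt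
  /-- … and it is full -/
  E_full1 : ∀ x ∈ MB, tp x 1 * E = E → x = 1
  E_full2 : ∀ x ∈ MB, E * tp x 1 = E → x = 1
  E_full3 : ∀ y ∈ MC, tp 1 y * E = E → y = 1
  E_full4 : ∀ y ∈ MC, E * tp 1 y = E → y = 1
  /-- fullness of the coproduct `Δ` -/
  Δ_full_left : ∀ V : Submodule ℂ M,
    (∀ a ∈ A, ∀ b ∈ A, Δ a * tp 1 b ∈
      Submodule.span ℂ (Set.image2 (fun x y => tp x y) (V : Set M) (A : Set M))) →
    (A : Set M) ⊆ (V : Set M)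
  Δ_full_right : ∀ V : Submodule ℂ M,
    (∀ a ∈ A, ∀ b ∈ A, tp b 1 * Δ a ∈
      Submodule.span ℂ (Set.image2 (fun x y => tp x y) (A : Set M) (V : Set M))) →
    (A : Set M) ⊆ (V : Set M)
  /-- Sweedler contraction `x ⊗ y ↦ S_B(x) y` -/
  mulSB : M2 →ₗ[ℂ] M
  mulSB_tp : ∀ x y : M, mulSB (tp x y) = SB x * y
  /-- Sweedler contraction `x ⊗ y ↦ x S_C(y)` -/
  mulSC : M2 →ₗ[ℂ] M
  mulSC_tp : ∀ x y : M, mulSC (tp x y) = x * SC y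
  /-- the leg map `ι ⊗ S` (with values in `M(A ⊗ Aᵒᵖ)`) -/
  iS : M2 →ₗ[ℂ] M2
  iS_tp : ∀ x y : M, iS (tp x y) = tp x (S y)
  iS_l : ∀ (x y : M) (w : M2), iS (tp x y * w) = tp x 1 * iS w * tp 1 (S y)
  iS_r : ∀ (x y : M) (w : M2), iS (w * tp x y) = tp 1 (S y) * iS w * tp x 1
  /-- the leg map `S ⊗ ι` -/
  Si : M2 →ₗ[ℂ] M2
  Si_tp : ∀ x y : M, Si (tp x y) = tp (S x) y
  Si_l : ∀ (x y : M) (w : M2), Si (tp x y * w) = tp 1 y * Si w * tp (S x) 1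
  Si_r : ∀ (x y : M) (w : M2), Si (w * tp x y) = tp (S x) 1 * Si w * tp 1 y
  /-- the leg map `ι ⊗ S⁻¹` -/
  iSinv : M2 →ₗ[ℂ] M2
  iSinv_tp : ∀ x y : M, iSinv (tp x y) = tp x (Sinv y)
  iSinv_l : ∀ (x y : M) (w : M2), iSinv (tp x y * w) = tp x 1 * iSinv w * tp 1 (Sinv y)
  iSinv_r : ∀ (x y : M) (w : M2), iSinv (w * tp x y) = tp 1 (Sinv y) * iSinv w * tp x 1
  /-- the leg map `S⁻¹ ⊗ ι` -/
  Sinvi : M2 →ₗ[ℂ] M2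
  Sinvi_tp : ∀ x y : M, Sinvi (tp x y) = tp (Sinv x) y
  Sinvi_l : ∀ (x y : M) (w : M2), Sinvi (tp x y * w) = tp 1 y * Sinvi w * tp (Sinv x) 1
  Sinvi_r : ∀ (x y : M) (w : M2), Sinvi (w * tp x y) = tp (Sinv x) 1 * Sinvi w * tp 1 y
  /-- the leg map `ι ⊗ S_C` -/
  iSC : M2 →ₗ[ℂ] M2
  iSC_tp : ∀ x y : M, iSC (tp x y) = tp x (SC y)
  /-- the leg map `S_B ⊗ ι` -/
  SBi : M2 →ₗ[ℂ] M2
  SBi_tp : ∀ x y : M, SBi (tp x y) = tp (SB x) y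
  /-- the leg map `ι ⊗ S_B⁻¹` -/
  iSBinv : M2 →ₗ[ℂ] M2
  iSBinv_tp : ∀ x y : M, iSBinv (tp x y) = tp x (SBinv y)
  /-- the leg map `S_C⁻¹ ⊗ ι` -/
  SCinvi : M2 →ₗ[ℂ] M2
  SCinvi_tp : ∀ x y : M, SCinvi (tp x y) = tp (SCinv x) y
  /-- the canonical maps `T₁(a ⊗ b) = Δ(a)(1 ⊗ b)`, `T₂(a ⊗ b) = (a ⊗ 1)Δ(b)`,
  `T₃(a ⊗ b) = (1 ⊗ b)Δ(a)`, `T₄(a ⊗ b) = Δ(b)(a ⊗ 1)` -/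
  T1 : M2 →ₗ[ℂ] M2
  T1_tp : ∀ x y : M, T1 (tp x y) = Δ x * tp 1 y
  T2 : M2 →ₗ[ℂ] M2
  T2_tp : ∀ x y : M, T2 (tp x y) = tp x 1 * Δ y
  T3 : M2 →ₗ[ℂ] M2
  T3_tp : ∀ x y : M, T3 (tp x y) = tp 1 y * Δ x
  T4 : M2 →ₗ[ℂ] M2
  T4_tp : ∀ x y : M, T4 (tp x y) = Δ y * tp x 1
  /-- ranges of the canonical maps -/
  rng1 : Submodule.span ℂ {z : M2 | ∃ a ∈ A, ∃ b ∈ A, z = Δ a * tp 1 b} =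
    Submodule.map (LinearMap.mulLeft ℂ E) AA
  rng2 : Submodule.span ℂ {z : M2 | ∃ a ∈ A, ∃ b ∈ A, z = tp a 1 * Δ b} =
    Submodule.map (LinearMap.mulRight ℂ E) AA
  rng3 : Submodule.span ℂ {z : M2 | ∃ a ∈ A, ∃ b ∈ A, z = tp 1 b * Δ a} =
    Submodule.map (LinearMap.mulRight ℂ E) AA
  rng4 : Submodule.span ℂ {z : M2 | ∃ a ∈ A, ∃ b ∈ A, z = Δ b * tp a 1} =
    Submodule.map (LinearMap.mulLeft ℂ E) AA
  /-- kernels of the canonical maps, described by `F₁ = (ι ⊗ S)E`,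
  `F₂ = (S ⊗ ι)E`, `F₃ = (ι ⊗ S⁻¹)E`, `F₄ = (S⁻¹ ⊗ ι)E` -/
  ker1 : AA ⊓ LinearMap.ker T1 =
    Submodule.span ℂ {z : M2 | ∃ a ∈ A, ∃ b ∈ A, z = tp a 1 * (1 - iS E) * tp 1 b}
  ker2 : AA ⊓ LinearMap.ker T2 =
    Submodule.span ℂ {z : M2 | ∃ a ∈ A, ∃ b ∈ A, z = tp a 1 * (1 - Si E) * tp 1 b}
  ker3 : AA ⊓ LinearMap.ker T3 =
    Submodule.span ℂ {z : M2 | ∃ a ∈ A, ∃ b ∈ A, z = tp 1 b * (1 - iSinv E) * tp a 1}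
  ker4 : AA ⊓ LinearMap.ker T4 =
    Submodule.span ℂ {z : M2 | ∃ a ∈ A, ∃ b ∈ A, z = tp 1 b * (1 - Sinvi E) * tp a 1}
  /-- the generalized inverse `R₁(a ⊗ b) = Σ a₍₁₎ ⊗ S(a₍₂₎)b` of `T₁`,
  determined by the antipode -/
  R1 : M2 →ₗ[ℂ] M2
  R1_tp : ∀ x y : M, R1 (tp x y) = iS (Δ x) * tp 1 y
  T1R1 : ∀ a ∈ A, ∀ b ∈ A, T1 (R1 (tp a b)) = E * tp a b
  R1T1 : ∀ a ∈ A, ∀ b ∈ A, R1 (T1 (tp a b)) = tp a 1 * iS E * tp 1 b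
  /-- third legs: `tpL w z = w₁₂ z₃` and `tpR x w = x₁ w₂₃` in `M3 = M(A⊗A⊗A)` -/
  tpL : M2 →ₗ[ℂ] M →ₗ[ℂ] M3
  tpR : M →ₗ[ℂ] M2 →ₗ[ℂ] M3
  tpL_mul : ∀ (w w' : M2) (z z' : M), tpL w z * tpL w' z' = tpL (w * w') (z * z')
  tpR_mul : ∀ (x x' : M) (w w' : M2), tpR x w * tpR x' w' = tpR (x * x') (w * w')
  tpLR : ∀ x y z : M, tpL (tp x y) z = tpR x (tp y z)
  tpL_one : tpL 1 1 = 1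
  /-- the extension `Δ ⊗ ι` -/
  Δ12 : M2 →ₗ[ℂ] M3
  Δ12_mul : ∀ w w' : M2, Δ12 (w * w') = Δ12 w * Δ12 w'
  Δ12_tp : ∀ x y : M, Δ12 (tp x y) = tpL (Δ x) y
  Δ12_one : Δ12 1 = tpL E 1
  /-- the extension `ι ⊗ Δ` -/
  Δ23 : M2 →ₗ[ℂ] M3
  Δ23_mul : ∀ w w' : M2, Δ23 (w * w') = Δ23 w * Δ23 w'
  Δ23_tp : ∀ x y : M, Δ23 (tp x y) = tpR x (Δ y)
  Δ23_one : Δ23 1 = tpR 1 E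
  /-- coassociativity (valid on all of `M(A)`) -/
  coassoc : ∀ x : M, Δ12 (Δ x) = Δ23 (Δ x)
  /-- `(Δ ⊗ ι)E = (E ⊗ 1)(1 ⊗ E) = (1 ⊗ E)(E ⊗ 1)` -/
  E_coassoc : Δ12 E = tpL E 1 * tpR 1 E
  E_coassoc' : Δ12 E = tpR 1 E * tpL E 1
  /-- the leg embedding `x ⊗ y ↦ x ⊗ 1 ⊗ y` (legs 1 and 3) -/
  leg13 : M2 →ₗ[ℂ] M3
  leg13_tp : ∀ x y : M, leg13 (tp x y) = tpL (tp x 1) y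
  /-- the identities determining the `Fᵢ` -/
  E13_1 : leg13 E * tpL (iS E) 1 = leg13 E * tpR 1 E
  E13_2 : tpR 1 (Si E) * leg13 E = tpL E 1 * leg13 E
  E13_3 : tpL (iSinv E) 1 * leg13 E = tpR 1 E * leg13 E
  E13_4 : leg13 E * tpR 1 (Sinvi E) = leg13 E * tpL E 1

namespace WMHA

variable {M M2 M3 : Type*} [Ring M] [Algebra ℂ M] [Ring M2] [Algebra ℂ M2]
  [Ring M3] [Algebra ℂ M3]


/-- For invertible `u, v ∈ M(B)` put `u' = S_C⁻¹(u)` and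
`v' = S_B(v)` in `M(C)`, so that `(u ⊗ 1)E = (1 ⊗ u')E` and
`E(v ⊗ 1) = E(1 ⊗ v')`.  Then `E(vu ⊗ 1)E = E` implies `E(1 ⊗ v'u')E = E`;
in particular, if `u'` and `v'` are each other's inverses in `M(C)` then
`E(vu ⊗ 1)E = E` holds (even when `u` and `v` are not each other's inverses). -/
theorem statement1 (H : WMHA M M2 M3) (u v ui vi : M)
    (hu : u ∈ H.MB) (hui : ui ∈ H.MB) (hv : v ∈ H.MB) (hvi : vi ∈ H.MB)
    (huui : u * ui = 1) (huiu : ui * u = 1) (hvvi : v * vi = 1) (hviv : vi * v = 1) :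
    H.tp u 1 * H.E = H.tp 1 (H.SCinv u) * H.E ∧
    H.E * H.tp v 1 = H.E * H.tp 1 (H.SB v) ∧
    (H.E * H.tp (v * u) 1 * H.E = H.E →
      H.E * H.tp 1 (H.SB v * H.SCinv u) * H.E = H.E) ∧
    ((H.SCinv u * H.SB v = 1 ∧ H.SB v * H.SCinv u = 1) →
      H.E * H.tp (v * u) 1 * H.E = H.E) := by
  have hEE : H.E * H.E = H.E := by
    have := H.Δ_mul 1 1
    rw [one_mul, H.Δ_one] at this
    exact this.symm
  have h1 : H.tp u 1 * H.E = H.tp 1 (H.SCinv u) * H.E := by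
    have := H.SC_char (H.SCinv u) (H.SCinv_MB u hu)
    rw [H.SC_SCinv u hu] at this
    exact this.symm
  have h2 : H.E * H.tp v 1 = H.E * H.tp 1 (H.SB v) := H.SB_char v hv
  have hkey : H.E * H.tp (v * u) 1 * H.E = H.E * H.tp 1 (H.SB v * H.SCinv u) * H.E := by
    calc H.E * H.tp (v * u) 1 * H.E
        = H.E * (H.tp v 1 * H.tp u 1) * H.E := by
          rw [H.tp_mul, one_mul]
      _ = (H.E * H.tp v 1) * (H.tp u 1 * H.E) := by simp only [mul_assoc]
      _ = (H.E * H.tp 1 (H.SB v)) * (H.tp 1 (H.SCinv u) * H.E) := by rw [h1, h2]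
      _ = H.E * (H.tp 1 (H.SB v) * H.tp 1 (H.SCinv u)) * H.E := by simp only [mul_assoc]
      _ = H.E * H.tp 1 (H.SB v * H.SCinv u) * H.E := by
          rw [H.tp_mul, one_mul]
  refine ⟨h1, h2, ?_, ?_⟩
  · intro h
    rw [← hkey]; exact h
  · rintro ⟨-, h⟩
    rw [hkey, h, H.tp_one, mul_one, hEE]

end WMHA
end
end

section
/- Let (A,Δ) be a regular weak multiplier Hopf algebra with canonical idempotent E, and let u, v be invertible elements of M(B) satisfying E(vu⊗1)E = E. Define E' = (u⊗1)E(v⊗1). Then E' is a separability idempotent in M(B⊗C), and its associated antipodal maps S'_B : B → C and S'_C : C → B are given by S'_B(x) = S_B(v x v^{-1}) for x ∈ B and S'_C(y) = u S_C(y) u^{-1} for y ∈ C. -/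
noncomputable section
set_option maxHeartbeats 1000000

namespace WMHA

variable {M M2 M3 : Type*} [Ring M] [Algebra ℂ M] [Ring M2] [Algebra ℂ M2]
  [Ring M3] [Algebra ℂ M3]


lemma tpW (H : WMHA M M2 M3) (a b c d : M) (w : M2) :
    H.tp a b * (H.tp c d * w) = H.tp (a * c) (b * d) * w := by
  rw [← mul_assoc, H.tp_mul]

lemma BCt_mulL (H : WMHA M M2 M3) {x y : M} (hx : x ∈ H.MB) (hy : y ∈ H.MC)
    {w : M2} (hw : w ∈ H.BCt) : H.tp x y * w ∈ H.BCt := by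
  rw [H.BCt_eq] at hw ⊢
  induction hw using Submodule.span_induction with
  | mem z hz =>
    obtain ⟨b, hb, c, hc, rfl⟩ := hz
    rw [H.tp_mul]
    exact Submodule.subset_span
      (Set.mem_image2_of_mem ((H.MB_B x hx b hb).1) ((H.MC_C y hy c hc).1))
  | zero => rw [mul_zero]; exact Submodule.zero_mem _
  | add a b ha hb iha ihb => rw [mul_add]; exact Submodule.add_mem _ iha ihb
  | smul r a ha ih => rw [mul_smul_comm]; exact Submodule.smul_mem _ _ ih

lemma BCt_mulR (H : WMHA M M2 M3) {x y : M} (hx : x ∈ H.MB) (hy : y ∈ H.MC)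
    {w : M2} (hw : w ∈ H.BCt) : w * H.tp x y ∈ H.BCt := by
  rw [H.BCt_eq] at hw ⊢
  induction hw using Submodule.span_induction with
  | mem z hz =>
    obtain ⟨b, hb, c, hc, rfl⟩ := hz
    rw [H.tp_mul]
    exact Submodule.subset_span
      (Set.mem_image2_of_mem ((H.MB_B x hx b hb).2) ((H.MC_C y hy c hc).2))
  | zero => rw [zero_mul]; exact Submodule.zero_mem _
  | add a b ha hb iha ihb => rw [add_mul]; exact Submodule.add_mem _ iha ihb
  | smul r a ha ih => rw [smul_mul_assoc]; exact Submodule.smul_mem _ _ ih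

/-- For invertible `u, v ∈ M(B)` with `E(vu ⊗ 1)E = E`, the
element `E' = (u ⊗ 1)E(v ⊗ 1)` is a separability idempotent in `M(B ⊗ C)`
(an idempotent, with `E'(B ⊗ 1)`, `(B ⊗ 1)E'`, `(1 ⊗ C)E'`, `E'(1 ⊗ C)` all in
`B ⊗ C`, and full), and its antipodal maps are `S'_B(x) = S_B(v x v⁻¹)` for
`x ∈ B` and `S'_C(y) = u S_C(y) u⁻¹` for `y ∈ C`. -/
theorem statement2 (H : WMHA M M2 M3) (u v ui vi : M)
    (hu : u ∈ H.MB) (hui : ui ∈ H.MB) (hv : v ∈ H.MB) (hvi : vi ∈ H.MB)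
    (huui : u * ui = 1) (huiu : ui * u = 1) (hvvi : v * vi = 1) (hviv : vi * v = 1)
    (hE : H.E * H.tp (v * u) 1 * H.E = H.E) :
    ∀ E' : M2, E' = H.tp u 1 * H.E * H.tp v 1 →
      (E' * E' = E' ∧
      (∀ b ∈ H.B, E' * H.tp b 1 ∈ H.BCt ∧ H.tp b 1 * E' ∈ H.BCt) ∧
      (∀ c ∈ H.C, H.tp 1 c * E' ∈ H.BCt ∧ E' * H.tp 1 c ∈ H.BCt) ∧
      (∀ x ∈ H.MB, H.tp x 1 * E' = E' → x = 1) ∧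
      (∀ x ∈ H.MB, E' * H.tp x 1 = E' → x = 1) ∧
      (∀ y ∈ H.MC, H.tp 1 y * E' = E' → y = 1) ∧
      (∀ y ∈ H.MC, E' * H.tp 1 y = E' → y = 1) ∧
      (∀ x ∈ H.B, E' * H.tp x 1 = E' * H.tp 1 (H.SB (v * x * vi))) ∧
      (∀ y ∈ H.C, H.tp 1 y * E' = H.tp (u * H.SC y * ui) 1 * E')) := by
  intro E' hE'
  subst hE'
  have h1C : (1 : M) ∈ H.MC := H.MC.one_mem
  have hEw : ∀ w : M2, H.E * (H.tp (v * u) 1 * (H.E * w)) = H.E * w := by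
    intro w; rw [← mul_assoc, ← mul_assoc, hE]
  refine ⟨?_, ?_, ?_, ?_, ?_, ?_, ?_, ?_, ?_⟩
  · -- idempotent
    simp only [mul_assoc, H.tp_mul, H.tpW, one_mul, mul_one]
    rw [hEw]
  · -- B-memberships
    intro b hb
    constructor
    · have heq : H.tp u 1 * H.E * H.tp v 1 * H.tp b 1
          = H.tp u 1 * (H.E * H.tp (v * b) 1) := by
        simp only [mul_assoc, H.tp_mul, H.tpW, one_mul, mul_one]
      rw [heq]
      exact H.BCt_mulL hu h1C (H.E_sep1 _ ((H.MB_B v hv b hb).1))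
    · have heq : H.tp b 1 * (H.tp u 1 * H.E * H.tp v 1)
          = H.tp (b * u) 1 * H.E * H.tp v 1 := by
        simp only [mul_assoc, H.tp_mul, H.tpW, one_mul, mul_one]
      rw [heq]
      exact H.BCt_mulR hv h1C (H.E_sep2 _ ((H.MB_B u hu b hb).2))
  · -- C-memberships
    intro c hc
    constructor
    · have heq : H.tp 1 c * (H.tp u 1 * H.E * H.tp v 1)
          = H.tp u 1 * (H.tp 1 c * H.E) * H.tp v 1 := by
        simp only [mul_assoc, H.tp_mul, H.tpW, one_mul, mul_one]
      rw [heq]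
      exact H.BCt_mulR hv h1C (H.BCt_mulL hu h1C (H.E_sep3 c hc))
    · have heq : H.tp u 1 * H.E * H.tp v 1 * H.tp 1 c
          = H.tp u 1 * (H.E * H.tp 1 c) * H.tp v 1 := by
        simp only [mul_assoc, H.tp_mul, H.tpW, one_mul, mul_one]
      rw [heq]
      exact H.BCt_mulR hv h1C (H.BCt_mulL hu h1C (H.E_sep4 c hc))
  · -- full 1
    intro x hx h
    have h2 := congrArg (fun w => H.tp ui 1 * w * H.tp vi 1) h
    simp only [mul_assoc, H.tp_mul, H.tpW, one_mul, mul_one, huiu, hvvi,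
      H.tp_one] at h2
    have h3 := H.E_full1 _ (H.MB.mul_mem hui (H.MB.mul_mem hx hu)) h2
    calc x = u * (ui * (x * u)) * ui := by
            rw [← mul_assoc, huui, one_mul, mul_assoc, huui, mul_one]
      _ = u * 1 * ui := by rw [h3]
      _ = 1 := by rw [mul_one, huui]
  · -- full 2
    intro x hx h
    have h2 := congrArg (fun w => H.tp ui 1 * w * H.tp vi 1) h
    simp only [mul_assoc, H.tp_mul, H.tpW, one_mul, mul_one, huiu, hvvi,
      H.tp_one] at h2
    have h3 := H.E_full2 _ (H.MB.mul_mem hv (H.MB.mul_mem hx hvi)) h2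
    calc x = vi * (v * (x * vi)) * v := by
            rw [← mul_assoc, hviv, one_mul, mul_assoc, hviv, mul_one]
      _ = vi * 1 * v := by rw [h3]
      _ = 1 := by rw [mul_one, hviv]
  · -- full 3
    intro y hy h
    have h2 := congrArg (fun w => H.tp ui 1 * w * H.tp vi 1) h
    simp only [mul_assoc, H.tp_mul, H.tpW, one_mul, mul_one, huiu, hvvi,
      H.tp_one] at h2
    exact H.E_full3 _ hy h2
  · -- full 4
    intro y hy h
    have h2 := congrArg (fun w => H.tp ui 1 * w * H.tp vi 1) h
    simp only [mul_assoc, H.tp_mul, H.tpW, one_mul, mul_one, huiu, hvvi,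
      H.tp_one] at h2
    exact H.E_full4 _ hy h2
  · -- antipodal map on B
    intro x hx
    have hm : v * (x * vi) ∈ H.MB :=
      H.MB.mul_mem hv (H.MB.mul_mem (H.B_le_MB hx) hvi)
    have hz := H.SB_char _ hm
    simp only [mul_assoc, H.tp_mul, H.tpW, one_mul, mul_one]
    have key : H.E * H.tp v (H.SB (v * (x * vi))) = H.E * H.tp (v * x) 1 := by
      calc H.E * H.tp v (H.SB (v * (x * vi)))
          = H.E * (H.tp 1 (H.SB (v * (x * vi))) * H.tp v 1) := by
            rw [H.tp_mul, mul_one, one_mul]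
        _ = H.E * H.tp 1 (H.SB (v * (x * vi))) * H.tp v 1 := by rw [mul_assoc]
        _ = H.E * H.tp (v * (x * vi)) 1 * H.tp v 1 := by rw [← hz]
        _ = H.E * (H.tp (v * (x * vi)) 1 * H.tp v 1) := by rw [mul_assoc]
        _ = H.E * H.tp (v * (x * (vi * v))) 1 := by
            rw [H.tp_mul, one_mul, mul_assoc, mul_assoc]
        _ = H.E * H.tp (v * x) 1 := by rw [hviv, mul_one]
    rw [key]
  · -- antipodal map on C
    intro y hy
    have hz := H.SC_char y (H.C_le_MC hy)
    simp only [mul_assoc, H.tp_mul, H.tpW, one_mul, mul_one, huiu]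
    calc H.tp u y * (H.E * H.tp v 1)
        = H.tp u 1 * (H.tp 1 y * (H.E * H.tp v 1)) := by
          rw [H.tpW, mul_one, one_mul]
      _ = H.tp u 1 * (H.tp 1 y * H.E * H.tp v 1) := by rw [mul_assoc]
      _ = H.tp u 1 * (H.tp (H.SC y) 1 * H.E * H.tp v 1) := by rw [hz]
      _ = H.tp u 1 * (H.tp (H.SC y) 1 * (H.E * H.tp v 1)) := by rw [mul_assoc]
      _ = H.tp (u * H.SC y) 1 * (H.E * H.tp v 1) := by rw [H.tpW, mul_one]

end WMHA
end
end

section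
/- Let (A,Δ) be a regular weak multiplier Hopf algebra with canonical idempotent E, let u, v be invertible elements of M(B) with E(vu⊗1)E = E, and set Δ'(a) = (u⊗1)Δ(a)(v⊗1) and E' = (u⊗1)E(v⊗1). Then Δ'(A)(1⊗A) = E'(A⊗A), (A⊗1)Δ'(A) = (A⊗A)E', (1⊗A)Δ'(A) = (A⊗A)E', and Δ'(A)(A⊗1) = E'(A⊗A), where each side denotes the linear span of the indicated products. -/
noncomputable section
set_option maxHeartbeats 1000000

namespace WMHA

variable {M M2 M3 : Type*} [Ring M] [Algebra ℂ M] [Ring M2] [Algebra ℂ M2]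
  [Ring M3] [Algebra ℂ M3]


/-- left and right multiplication maps commute on submodules -/
lemma mapLR_comm (x y : M2) (V : Submodule ℂ M2) :
    Submodule.map (LinearMap.mulLeft ℂ x) (Submodule.map (LinearMap.mulRight ℂ y) V) =
    Submodule.map (LinearMap.mulRight ℂ y) (Submodule.map (LinearMap.mulLeft ℂ x) V) := by
  rw [← Submodule.map_comp, ← Submodule.map_comp]
  congr 1
  ext z
  simp [mul_assoc]

/-- `(w ⊗ 1) · (A ⊗ A) = A ⊗ A` for invertible `w` -/
lemma mapAA_mulLeft (H : WMHA M M2 M3) (w wi : M) (h1 : w * wi = 1) (h2 : wi * w = 1) :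
    Submodule.map (LinearMap.mulLeft ℂ (H.tp w 1)) H.AA = H.AA := by
  rw [H.AA_eq, Submodule.map_span]
  apply le_antisymm
  · rw [Submodule.span_le]
    rintro _ ⟨_, ⟨a, ha, b, hb, rfl⟩, rfl⟩
    have : (LinearMap.mulLeft ℂ (H.tp w 1)) (H.tp a b) = H.tp (w * a) b := by
      rw [LinearMap.mulLeft_apply, H.tp_mul, one_mul]
    rw [this]
    exact Submodule.subset_span (Set.mem_image2_of_mem (H.idealL w a ha) hb)
  · rw [Submodule.span_le]
    rintro _ ⟨a, ha, b, hb, rfl⟩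
    apply Submodule.subset_span
    refine ⟨H.tp (wi * a) b, Set.mem_image2_of_mem (H.idealL wi a ha) hb, ?_⟩
    show H.tp w 1 * H.tp (wi * a) b = H.tp a b
    rw [H.tp_mul, one_mul, ← mul_assoc, h1, one_mul]

/-- `(A ⊗ A) · (w ⊗ 1) = A ⊗ A` for invertible `w` -/
lemma mapAA_mulRight (H : WMHA M M2 M3) (w wi : M) (h1 : w * wi = 1) (h2 : wi * w = 1) :
    Submodule.map (LinearMap.mulRight ℂ (H.tp w 1)) H.AA = H.AA := by
  rw [H.AA_eq, Submodule.map_span]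
  apply le_antisymm
  · rw [Submodule.span_le]
    rintro _ ⟨_, ⟨a, ha, b, hb, rfl⟩, rfl⟩
    have : (LinearMap.mulRight ℂ (H.tp w 1)) (H.tp a b) = H.tp (a * w) b := by
      rw [LinearMap.mulRight_apply, H.tp_mul, mul_one]
    rw [this]
    exact Submodule.subset_span (Set.mem_image2_of_mem (H.idealR w a ha) hb)
  · rw [Submodule.span_le]
    rintro _ ⟨a, ha, b, hb, rfl⟩
    apply Submodule.subset_span
    refine ⟨H.tp (a * wi) b, Set.mem_image2_of_mem (H.idealR wi a ha) hb, ?_⟩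
    show H.tp (a * wi) b * H.tp w 1 = H.tp a b
    rw [H.tp_mul, mul_one, mul_assoc, h2, mul_one]

lemma rearrR (H : WMHA M M2 M3) (u v b : M) (w : M2) :
    H.tp u 1 * w * H.tp v 1 * H.tp 1 b = H.tp u 1 * (w * H.tp 1 b * H.tp v 1) := by
  have swap : H.tp v 1 * H.tp 1 b = H.tp 1 b * H.tp v 1 := by simp [H.tp_mul]
  simp only [mul_assoc]
  rw [swap]

lemma rearrL (H : WMHA M M2 M3) (u v b : M) (w : M2) :
    H.tp 1 b * (H.tp u 1 * w * H.tp v 1) = H.tp u 1 * (H.tp 1 b * w * H.tp v 1) := by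
  have swap : H.tp 1 b * H.tp u 1 = H.tp u 1 * H.tp 1 b := by simp [H.tp_mul]
  have h : ∀ x : M2, H.tp 1 b * (H.tp u 1 * x) = H.tp u 1 * (H.tp 1 b * x) := fun x => by
    rw [← mul_assoc, swap, mul_assoc]
  simp only [mul_assoc]
  rw [h]

lemma rearr2 (H : WMHA M M2 M3) (u v a : M) (w : M2) :
    H.tp a 1 * (H.tp u 1 * w * H.tp v 1) = H.tp (a * u) 1 * w * H.tp v 1 := by
  have h : H.tp a 1 * H.tp u 1 = H.tp (a * u) 1 := by simp [H.tp_mul]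
  simp only [← mul_assoc]
  rw [h]

lemma rearr4 (H : WMHA M M2 M3) (u v b : M) (w : M2) :
    H.tp u 1 * w * H.tp v 1 * H.tp b 1 = H.tp u 1 * (w * H.tp (v * b) 1) := by
  have h : H.tp v 1 * H.tp b 1 = H.tp (v * b) 1 := by simp [H.tp_mul]
  simp only [mul_assoc]
  rw [h]

/-- For invertible `u, v ∈ M(B)` with `E(vu ⊗ 1)E = E`,
`Δ'(a) = (u ⊗ 1)Δ(a)(v ⊗ 1)` and `E' = (u ⊗ 1)E(v ⊗ 1)`, one has
`Δ'(A)(1 ⊗ A) = E'(A ⊗ A)`, `(A ⊗ 1)Δ'(A) = (A ⊗ A)E'`,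
`(1 ⊗ A)Δ'(A) = (A ⊗ A)E'` and `Δ'(A)(A ⊗ 1) = E'(A ⊗ A)`
(each side being the linear span of the indicated products). -/
theorem statement7 (H : WMHA M M2 M3) (u v ui vi : M)
    (hu : u ∈ H.MB) (hui : ui ∈ H.MB) (hv : v ∈ H.MB) (hvi : vi ∈ H.MB)
    (huui : u * ui = 1) (huiu : ui * u = 1) (hvvi : v * vi = 1) (hviv : vi * v = 1)
    (hE : H.E * H.tp (v * u) 1 * H.E = H.E) :
    ∀ E' : M2, E' = H.tp u 1 * H.E * H.tp v 1 →
      (Submodule.span ℂ {z : M2 | ∃ a ∈ H.A, ∃ b ∈ H.A,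
          z = (H.tp u 1 * H.Δ a * H.tp v 1) * H.tp 1 b} =
        Submodule.map (LinearMap.mulLeft ℂ E') H.AA ∧
      Submodule.span ℂ {z : M2 | ∃ a ∈ H.A, ∃ b ∈ H.A,
          z = H.tp a 1 * (H.tp u 1 * H.Δ b * H.tp v 1)} =
        Submodule.map (LinearMap.mulRight ℂ E') H.AA ∧
      Submodule.span ℂ {z : M2 | ∃ a ∈ H.A, ∃ b ∈ H.A,
          z = H.tp 1 b * (H.tp u 1 * H.Δ a * H.tp v 1)} =
        Submodule.map (LinearMap.mulRight ℂ E') H.AA ∧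
      Submodule.span ℂ {z : M2 | ∃ a ∈ H.A, ∃ b ∈ H.A,
          z = (H.tp u 1 * H.Δ a * H.tp v 1) * H.tp b 1} =
        Submodule.map (LinearMap.mulLeft ℂ E') H.AA) := by
  rintro E' rfl
  refine ⟨?_, ?_, ?_, ?_⟩
  · -- part 1
    have hset : {z : M2 | ∃ a ∈ H.A, ∃ b ∈ H.A,
          z = (H.tp u 1 * H.Δ a * H.tp v 1) * H.tp 1 b}
        = ⇑((LinearMap.mulLeft ℂ (H.tp u 1)).comp (LinearMap.mulRight ℂ (H.tp v 1))) ''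
          {z : M2 | ∃ a ∈ H.A, ∃ b ∈ H.A, z = H.Δ a * H.tp 1 b} := by
      ext z
      simp only [Set.mem_image, Set.mem_setOf_eq, LinearMap.comp_apply,
        LinearMap.mulLeft_apply, LinearMap.mulRight_apply]
      constructor
      · rintro ⟨a, ha, b, hb, rfl⟩
        exact ⟨H.Δ a * H.tp 1 b, ⟨a, ha, b, hb, rfl⟩, (rearrR H u v b (H.Δ a)).symm⟩
      · rintro ⟨_, ⟨a, ha, b, hb, rfl⟩, rfl⟩
        exact ⟨a, ha, b, hb, (rearrR H u v b (H.Δ a)).symm⟩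
    rw [hset, Submodule.span_image, H.rng1, Submodule.map_comp,
      ← mapLR_comm H.E (H.tp v 1) H.AA, mapAA_mulRight H v vi hvvi hviv,
      LinearMap.mulLeft_mul, LinearMap.mulLeft_mul, Submodule.map_comp, Submodule.map_comp,
      mapAA_mulLeft H v vi hvvi hviv]
  · -- part 2
    have hset : {z : M2 | ∃ a ∈ H.A, ∃ b ∈ H.A,
          z = H.tp a 1 * (H.tp u 1 * H.Δ b * H.tp v 1)}
        = ⇑(LinearMap.mulRight ℂ (H.tp v 1)) ''
          {z : M2 | ∃ a ∈ H.A, ∃ b ∈ H.A, z = H.tp a 1 * H.Δ b} := by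
      ext z
      simp only [Set.mem_image, Set.mem_setOf_eq, LinearMap.mulRight_apply]
      constructor
      · rintro ⟨a, ha, b, hb, rfl⟩
        exact ⟨H.tp (a * u) 1 * H.Δ b, ⟨a * u, H.idealR u a ha, b, hb, rfl⟩,
          (rearr2 H u v a (H.Δ b)).symm⟩
      · rintro ⟨_, ⟨a, ha, b, hb, rfl⟩, rfl⟩
        refine ⟨a * ui, H.idealR ui a ha, b, hb, ?_⟩
        rw [rearr2 H u v (a * ui) (H.Δ b), mul_assoc a ui u, huiu, mul_one]
    rw [hset, Submodule.span_image, H.rng2,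
      LinearMap.mulRight_mul, LinearMap.mulRight_mul, Submodule.map_comp, Submodule.map_comp,
      mapAA_mulRight H u ui huui huiu]
  · -- part 3
    have hset : {z : M2 | ∃ a ∈ H.A, ∃ b ∈ H.A,
          z = H.tp 1 b * (H.tp u 1 * H.Δ a * H.tp v 1)}
        = ⇑((LinearMap.mulLeft ℂ (H.tp u 1)).comp (LinearMap.mulRight ℂ (H.tp v 1))) ''
          {z : M2 | ∃ a ∈ H.A, ∃ b ∈ H.A, z = H.tp 1 b * H.Δ a} := by
      ext z
      simp only [Set.mem_image, Set.mem_setOf_eq, LinearMap.comp_apply,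
        LinearMap.mulLeft_apply, LinearMap.mulRight_apply]
      constructor
      · rintro ⟨a, ha, b, hb, rfl⟩
        exact ⟨H.tp 1 b * H.Δ a, ⟨a, ha, b, hb, rfl⟩, (rearrL H u v b (H.Δ a)).symm⟩
      · rintro ⟨_, ⟨a, ha, b, hb, rfl⟩, rfl⟩
        exact ⟨a, ha, b, hb, (rearrL H u v b (H.Δ a)).symm⟩
    rw [hset, Submodule.span_image, H.rng3, Submodule.map_comp,
      mapLR_comm (H.tp u 1) (H.tp v 1) (Submodule.map (LinearMap.mulRight ℂ H.E) H.AA),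
      mapLR_comm (H.tp u 1) H.E H.AA, mapAA_mulLeft H u ui huui huiu,
      LinearMap.mulRight_mul, LinearMap.mulRight_mul, Submodule.map_comp, Submodule.map_comp,
      mapAA_mulRight H u ui huui huiu]
  · -- part 4
    have hset : {z : M2 | ∃ a ∈ H.A, ∃ b ∈ H.A,
          z = (H.tp u 1 * H.Δ a * H.tp v 1) * H.tp b 1}
        = ⇑(LinearMap.mulLeft ℂ (H.tp u 1)) ''
          {z : M2 | ∃ a ∈ H.A, ∃ b ∈ H.A, z = H.Δ b * H.tp a 1} := by
      ext z
      simp only [Set.mem_image, Set.mem_setOf_eq, LinearMap.mulLeft_apply]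
      constructor
      · rintro ⟨a, ha, b, hb, rfl⟩
        exact ⟨H.Δ a * H.tp (v * b) 1, ⟨v * b, H.idealL v b hb, a, ha, rfl⟩,
          (rearr4 H u v b (H.Δ a)).symm⟩
      · rintro ⟨_, ⟨a, ha, b, hb, rfl⟩, rfl⟩
        refine ⟨b, hb, vi * a, H.idealL vi a ha, ?_⟩
        rw [rearr4 H u v (vi * a) (H.Δ b), ← mul_assoc v vi a, hvvi, one_mul]
    rw [hset, Submodule.span_image, H.rng4,
      LinearMap.mulLeft_mul, LinearMap.mulLeft_mul, Submodule.map_comp, Submodule.map_comp,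
      mapAA_mulLeft H v vi hvvi hviv]

end WMHA
end
end

section
/- Let (A,Δ) be a regular weak multiplier Hopf algebra with canonical idempotent E, let u, v be invertible elements of M(B) with E(vu⊗1)E = E, and set Δ'(a) = (u⊗1)Δ(a)(v⊗1) and E' = (u⊗1)E(v⊗1). Then (Δ'⊗ι)E' = (E'⊗1)(1⊗E') = (1⊗E')(E'⊗1) in M(A⊗A⊗A). -/
noncomputable section
set_option maxHeartbeats 1000000

namespace WMHA

variable {M M2 M3 : Type*} [Ring M] [Algebra ℂ M] [Ring M2] [Algebra ℂ M2]
  [Ring M3] [Algebra ℂ M3]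


/-- For invertible `u, v ∈ M(B)` with `E(vu ⊗ 1)E = E` and
`E' = (u ⊗ 1)E(v ⊗ 1)`, one has
`(Δ' ⊗ ι)E' = (E' ⊗ 1)(1 ⊗ E') = (1 ⊗ E')(E' ⊗ 1)` in `M(A ⊗ A ⊗ A)`,
where `(Δ' ⊗ ι)(w) = ((u ⊗ 1) ⊗ 1)((Δ ⊗ ι)w)((v ⊗ 1) ⊗ 1)` is the canonical
extension of `Δ' ⊗ ι`. -/
theorem statement8 (H : WMHA M M2 M3) (u v ui vi : M)
    (hu : u ∈ H.MB) (hui : ui ∈ H.MB) (hv : v ∈ H.MB) (hvi : vi ∈ H.MB)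
    (huui : u * ui = 1) (huiu : ui * u = 1) (hvvi : v * vi = 1) (hviv : vi * v = 1)
    (hE : H.E * H.tp (v * u) 1 * H.E = H.E) :
    ∀ E' : M2, E' = H.tp u 1 * H.E * H.tp v 1 →
      (H.tpL (H.tp u 1) 1 * H.Δ12 E' * H.tpL (H.tp v 1) 1 =
        H.tpL E' 1 * H.tpR 1 E' ∧
      H.tpL (H.tp u 1) 1 * H.Δ12 E' * H.tpL (H.tp v 1) 1 =
        H.tpR 1 E' * H.tpL E' 1) := by
  intro E' hE'
  subst hE'
  -- basic splitting lemmas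
  have tpL_split : ∀ w w' : M2, H.tpL (w * w') 1 = H.tpL w 1 * H.tpL w' 1 := by
    intro w w'; rw [H.tpL_mul, one_mul]
  have tpR_split : ∀ w w' : M2, H.tpR 1 (w * w') = H.tpR 1 w * H.tpR 1 w' := by
    intro w w'; rw [H.tpR_mul, one_mul]
  -- E is idempotent
  have hEE : H.E * H.E = H.E := by
    have h := H.Δ_mul 1 1
    rw [one_mul, H.Δ_one] at h
    exact h.symm
  -- E commutes with 1 ⊗ u and 1 ⊗ v
  have hEu : H.E * H.tp 1 u = H.tp 1 u * H.E := by
    rw [← H.Δ_MB u hu, ← H.Δ_MB' u hu]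
  have hEv : H.E * H.tp 1 v = H.tp 1 v * H.E := by
    rw [← H.Δ_MB v hv, ← H.Δ_MB' v hv]
  -- conversion lemmas between tpL and tpR for elementary tensors
  have c1 : H.tpL (H.tp u 1) 1 = H.tpR u 1 := by rw [H.tpLR, H.tp_one]
  have c2 : H.tpL (H.tp v 1) 1 = H.tpR v 1 := by rw [H.tpLR, H.tp_one]
  have c3 : H.tpL (H.tp 1 u) 1 = H.tpR 1 (H.tp u 1) := H.tpLR 1 u 1
  have c4 : H.tpL (H.tp 1 v) 1 = H.tpR 1 (H.tp v 1) := H.tpLR 1 v 1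
  -- the swap E₁₂ E₂₃ = E₂₃ E₁₂
  have sw : H.tpR 1 H.E * H.tpL H.E 1 = H.tpL H.E 1 * H.tpR 1 H.E := by
    rw [← H.E_coassoc, ← H.E_coassoc']
  -- elementary tensor computations in M2
  have tvv : H.tp v 1 * H.tp 1 v = H.tp v v := by rw [H.tp_mul, mul_one, one_mul]
  have tvv' : H.tp 1 v * H.tp v 1 = H.tp v v := by rw [H.tp_mul, mul_one, one_mul]
  have tuu : H.tp u 1 * H.tp 1 u = H.tp u u := by rw [H.tp_mul, mul_one, one_mul]
  have tuu' : H.tp 1 u * H.tp u 1 = H.tp u u := by rw [H.tp_mul, mul_one, one_mul]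
  have tuv : H.tp 1 v * H.tp u 1 = H.tp u 1 * H.tp 1 v := by
    rw [H.tp_mul, H.tp_mul, mul_one, one_mul, mul_one, one_mul]
  -- key sublemma P1
  have P1 : H.tpR 1 H.E * H.tpL (H.E * H.tp v v) 1
      = H.tpL H.E 1 * H.tpR v (H.E * H.tp v 1) := by
    calc H.tpR 1 H.E * H.tpL (H.E * H.tp v v) 1
        = H.tpR 1 H.E * (H.tpL H.E 1 * H.tpL (H.tp v v) 1) := by
          rw [tpL_split]
      _ = H.tpR 1 H.E * H.tpL H.E 1 * H.tpL (H.tp v v) 1 := by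
          rw [mul_assoc]
      _ = H.tpL H.E 1 * H.tpR 1 H.E * H.tpL (H.tp v v) 1 := by rw [sw]
      _ = H.tpL H.E 1 * (H.tpR 1 H.E * (H.tpR v 1 * H.tpR 1 (H.tp v 1))) := by
          rw [← tvv, tpL_split, c2, c4, mul_assoc]
      _ = H.tpL H.E 1 * H.tpR v (H.E * H.tp v 1) := by
          simp only [H.tpR_mul, one_mul, mul_one]
  -- the common normal form
  have hX1 : H.tpL (H.tp u 1) 1 * H.Δ12 (H.tp u 1 * H.E * H.tp v 1) * H.tpL (H.tp v 1) 1
      = H.tpL (H.tp u u * H.E) 1 * H.tpR v (H.E * H.tp v 1) := by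
    have mA : H.tp u 1 * H.Δ u * H.E = H.tp u u * H.E := by
      rw [H.Δ_MB' u hu, ← mul_assoc, tuu, mul_assoc, hEE]
    have mB : H.Δ v * H.tp v 1 = H.E * H.tp v v := by
      rw [H.Δ_MB v hv, mul_assoc, tvv']
    calc H.tpL (H.tp u 1) 1 * H.Δ12 (H.tp u 1 * H.E * H.tp v 1) * H.tpL (H.tp v 1) 1
        = H.tpL (H.tp u 1) 1 * (H.tpL (H.Δ u) 1 * H.Δ12 H.E * H.tpL (H.Δ v) 1)
            * H.tpL (H.tp v 1) 1 := by
          rw [H.Δ12_mul, H.Δ12_mul, H.Δ12_tp, H.Δ12_tp]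
      _ = H.tpL (H.tp u 1) 1 * H.tpL (H.Δ u) 1 * (H.tpL H.E 1 * H.tpR 1 H.E)
            * (H.tpL (H.Δ v) 1 * H.tpL (H.tp v 1) 1) := by
          rw [H.E_coassoc]; simp only [mul_assoc]
      _ = H.tpL (H.tp u 1 * H.Δ u * H.E) 1 * (H.tpR 1 H.E * H.tpL (H.Δ v * H.tp v 1) 1) := by
          rw [tpL_split, tpL_split, tpL_split]; simp only [mul_assoc]
      _ = H.tpL (H.tp u u * H.E) 1 * (H.tpL H.E 1 * H.tpR v (H.E * H.tp v 1)) := by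
          rw [mA, mB, P1]
      _ = H.tpL (H.tp u u * H.E) 1 * H.tpR v (H.E * H.tp v 1) := by
          rw [← mul_assoc, ← tpL_split, mul_assoc, hEE]
  have hX2 : H.tpL (H.tp u 1 * H.E * H.tp v 1) 1 * H.tpR 1 (H.tp u 1 * H.E * H.tp v 1)
      = H.tpL (H.tp u u * H.E) 1 * H.tpR v (H.E * H.tp v 1) := by
    have m1 : H.tp u 1 * H.E * H.tp v 1 * H.tp 1 u = H.tp u u * H.E * H.tp v 1 := by
      rw [mul_assoc, mul_assoc]
      rw [show H.tp v 1 * H.tp 1 u = H.tp 1 u * H.tp v 1 by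
        rw [H.tp_mul, H.tp_mul, mul_one, one_mul, mul_one, one_mul]]
      rw [← mul_assoc (H.E), hEu, ← mul_assoc, ← mul_assoc, tuu, mul_assoc]
    calc H.tpL (H.tp u 1 * H.E * H.tp v 1) 1 * H.tpR 1 (H.tp u 1 * H.E * H.tp v 1)
        = H.tpL (H.tp u 1 * H.E * H.tp v 1) 1
            * (H.tpL (H.tp 1 u) 1 * H.tpR 1 (H.E * H.tp v 1)) := by
          rw [tpR_split, tpR_split, c3, tpR_split]; simp only [mul_assoc]
      _ = H.tpL (H.tp u 1 * H.E * H.tp v 1 * H.tp 1 u) 1 * H.tpR 1 (H.E * H.tp v 1) := by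
          conv_rhs => rw [tpL_split]
          simp only [mul_assoc]
      _ = H.tpL (H.tp u u * H.E) 1 * (H.tpR v 1 * H.tpR 1 (H.E * H.tp v 1)) := by
          rw [m1, tpL_split, c2, mul_assoc]
      _ = H.tpL (H.tp u u * H.E) 1 * H.tpR v (H.E * H.tp v 1) := by
          rw [H.tpR_mul, mul_one, one_mul]
  have hX3 : H.tpR 1 (H.tp u 1 * H.E * H.tp v 1) * H.tpL (H.tp u 1 * H.E * H.tp v 1) 1
      = H.tpL (H.tp u u * H.E) 1 * H.tpR v (H.E * H.tp v 1) := by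
    have m2 : H.tp 1 v * (H.tp u 1 * H.E * H.tp v 1) = H.tp u 1 * (H.E * H.tp v v) := by
      rw [← mul_assoc, ← mul_assoc, tuv, mul_assoc (H.tp u 1), ← hEv, mul_assoc,
        mul_assoc, tvv', ← mul_assoc]
    calc H.tpR 1 (H.tp u 1 * H.E * H.tp v 1) * H.tpL (H.tp u 1 * H.E * H.tp v 1) 1
        = H.tpL (H.tp 1 u) 1 * H.tpR 1 H.E * (H.tpL (H.tp 1 v) 1
            * H.tpL (H.tp u 1 * H.E * H.tp v 1) 1) := by
          rw [tpR_split, tpR_split, c3, c4, mul_assoc, mul_assoc, mul_assoc]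
      _ = H.tpL (H.tp 1 u) 1 * H.tpR 1 H.E
            * (H.tpL (H.tp u 1) 1 * H.tpL (H.E * H.tp v v) 1) := by
          rw [← tpL_split, m2, tpL_split]
      _ = H.tpL (H.tp 1 u) 1 * (H.tpR u 1 * (H.tpR 1 H.E * H.tpL (H.E * H.tp v v) 1)) := by
          rw [c1, mul_assoc]
          rw [show H.tpR 1 H.E * (H.tpR u 1 * H.tpL (H.E * H.tp v v) 1)
              = H.tpR u 1 * (H.tpR 1 H.E * H.tpL (H.E * H.tp v v) 1) by
            rw [← mul_assoc, ← mul_assoc, H.tpR_mul, H.tpR_mul, one_mul, mul_one,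
              one_mul, mul_one]]
      _ = H.tpL (H.tp 1 u) 1 * (H.tpR u 1 * (H.tpL H.E 1 * H.tpR v (H.E * H.tp v 1))) := by
          rw [P1]
      _ = H.tpL (H.tp 1 u * H.tp u 1 * H.E) 1 * H.tpR v (H.E * H.tp v 1) := by
          rw [← c1, tpL_split, tpL_split, mul_assoc, mul_assoc]
      _ = H.tpL (H.tp u u * H.E) 1 * H.tpR v (H.E * H.tp v 1) := by rw [tuu']
  exact ⟨hX1.trans hX2.symm, hX1.trans hX3.symm⟩

end WMHA
end
end

section
/- Let (A,Δ) be a regular weak multiplier Hopf algebra, let u, v be invertible elements of M(B) with E(vu⊗1)E = E, and let Δ'(a) = (u⊗1)Δ(a)(v⊗1). Define the canonical maps T_1(a⊗b) = Δ(a)(1⊗b), T_2(a⊗b) = (a⊗1)Δ(b), T_3(a⊗b) = (1⊗b)Δ(a), T_4(a⊗b) = Δ(b)(a⊗1) on A⊗A, and T'_1, T'_2, T'_3, T'_4 the corresponding maps with Δ replaced by Δ'. Then Ker(T'_i) = Ker(T_i) for i = 1, 2, 3, 4. -/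
noncomputable section
set_option maxHeartbeats 1000000

namespace WMHA

variable {M M2 M3 : Type*} [Ring M] [Algebra ℂ M] [Ring M2] [Algebra ℂ M2]
  [Ring M3] [Algebra ℂ M3]


/-- For invertible `u, v ∈ M(B)` with `E(vu ⊗ 1)E = E`, the
canonical maps `T'ᵢ` of the modified coproduct `Δ'(a) = (u ⊗ 1)Δ(a)(v ⊗ 1)`
have the same kernels (as maps on `A ⊗ A`) as the canonical maps `Tᵢ` of `Δ`,
for `i = 1, 2, 3, 4`.  (Here `T'₁ = (u ⊗ 1) T₁(·) (v ⊗ 1)`,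
`T'₂ = T₂(· (u ⊗ 1)) (v ⊗ 1)`, `T'₃ = (u ⊗ 1) T₃(·) (v ⊗ 1)` and
`T'₄ = (u ⊗ 1) T₄((v ⊗ 1) ·)`.) -/
theorem statement9 (H : WMHA M M2 M3) (u v ui vi : M)
    (hu : u ∈ H.MB) (hui : ui ∈ H.MB) (hv : v ∈ H.MB) (hvi : vi ∈ H.MB)
    (huui : u * ui = 1) (huiu : ui * u = 1) (hvvi : v * vi = 1) (hviv : vi * v = 1)
    (hE : H.E * H.tp (v * u) 1 * H.E = H.E) :
    ∀ w ∈ H.AA,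
      (H.tp u 1 * H.T1 w * H.tp v 1 = 0 ↔ H.T1 w = 0) ∧
      (H.T2 (w * H.tp u 1) * H.tp v 1 = 0 ↔ H.T2 w = 0) ∧
      (H.tp u 1 * H.T3 w * H.tp v 1 = 0 ↔ H.T3 w = 0) ∧
      (H.tp u 1 * H.T4 (H.tp v 1 * w) = 0 ↔ H.T4 w = 0) := by
  -- basic facts
  have hEΔ : ∀ x : M, H.E * H.Δ x = H.Δ x := fun x => by
    rw [← H.Δ_one, ← H.Δ_mul, one_mul]
  have hΔE : ∀ x : M, H.Δ x * H.E = H.Δ x := fun x => by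
    rw [← H.Δ_one, ← H.Δ_mul, mul_one]
  set c := H.SCinv u with hc
  set ci := H.SCinv ui with hci
  have hcci : c * ci = 1 := by
    rw [hc, hci, ← H.SCinv_antimul ui hui u hu, huiu, H.SCinv_one]
  have hcic : ci * c = 1 := by
    rw [hc, hci, ← H.SCinv_antimul u hu ui hui, huui, H.SCinv_one]
  set d := H.SB v with hd
  set di := H.SB vi with hdi
  have hddi : d * di = 1 := by
    rw [hd, hdi, ← H.SB_antimul vi hvi v hv, hviv, H.SB_one]
  have hdid : di * d = 1 := by
    rw [hd, hdi, ← H.SB_antimul v hv vi hvi, hvvi, H.SB_one]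
  have huE : H.tp u 1 * H.E = H.tp 1 c * H.E := by
    have h := H.SC_char c (H.SCinv_MB u hu)
    rw [H.SC_SCinv u hu] at h
    exact h.symm
  have hvE : H.E * H.tp v 1 = H.E * H.tp 1 d := H.SB_char v hv
  -- sandwich lemma
  have sandwich : ∀ p pi q qi : M2, pi * p = 1 → q * qi = 1 →
      ∀ z : M2, (p * z * q = 0 ↔ z = 0) := by
    intro p pi q qi hp hq z
    constructor
    · intro h
      have h2 : pi * (p * z * q) * qi = z := by
        simp only [← mul_assoc]
        rw [hp, one_mul, mul_assoc, hq, mul_one]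
      rw [h, mul_zero, zero_mul] at h2
      exact h2.symm
    · intro h; rw [h, mul_zero, zero_mul]
  have inv_u : H.tp ui 1 * H.tp u 1 = 1 := by
    rw [H.tp_mul, huiu, one_mul, H.tp_one]
  have inv_v : H.tp v 1 * H.tp vi 1 = 1 := by
    rw [H.tp_mul, hvvi, one_mul, H.tp_one]
  have inv_c : H.tp 1 ci * H.tp 1 c = 1 := by
    rw [H.tp_mul, one_mul, hcic, H.tp_one]
  have inv_d : H.tp 1 d * H.tp 1 di = 1 := by
    rw [H.tp_mul, one_mul, hddi, H.tp_one]
  -- key identity for T2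
  have key2 : ∀ x y : M, H.T2 (H.tp x y * H.tp u 1) = H.tp 1 c * H.T2 (H.tp x y) := by
    intro x y
    rw [H.tp_mul, mul_one, H.T2_tp, H.T2_tp]
    have h1 : H.tp (x * u) 1 = H.tp x 1 * H.tp u 1 := by rw [H.tp_mul, one_mul]
    have h2 : H.tp u 1 * H.Δ y = H.tp 1 c * H.Δ y := by
      conv_lhs => rw [← hEΔ y, ← mul_assoc, huE, mul_assoc, hEΔ y]
    have h3 : H.tp x 1 * H.tp 1 c = H.tp 1 c * H.tp x 1 := by
      rw [H.tp_mul, H.tp_mul, mul_one, one_mul, one_mul, mul_one]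
    rw [h1, mul_assoc, h2, ← mul_assoc, h3, mul_assoc]
  -- key identity for T4
  have key4 : ∀ x y : M, H.T4 (H.tp v 1 * H.tp x y) = H.T4 (H.tp x y) * H.tp 1 d := by
    intro x y
    rw [H.tp_mul, one_mul, H.T4_tp, H.T4_tp]
    have h1 : H.tp (v * x) 1 = H.tp v 1 * H.tp x 1 := by rw [H.tp_mul, one_mul]
    have h2 : H.Δ y * H.tp v 1 = H.Δ y * H.tp 1 d := by
      conv_lhs => rw [← hΔE y, mul_assoc, hvE, ← mul_assoc, hΔE y]
    have h3 : H.tp 1 d * H.tp x 1 = H.tp x 1 * H.tp 1 d := by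
      rw [H.tp_mul, H.tp_mul, mul_one, one_mul, one_mul, mul_one]
    rw [h1, ← mul_assoc, h2, mul_assoc, h3, ← mul_assoc]
  -- linear extension to AA
  have K2 : ∀ w ∈ H.AA, H.T2 (w * H.tp u 1) = H.tp 1 c * H.T2 w := by
    intro w hw
    have hle : H.AA ≤ LinearMap.ker
        ((H.T2 ∘ₗ LinearMap.mulRight ℂ (H.tp u 1)) -
          (LinearMap.mulLeft ℂ (H.tp 1 c) ∘ₗ H.T2)) := by
      rw [H.AA_eq, Submodule.span_le]
      rintro z ⟨a, ha, b, hb, rfl⟩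
      simp only [SetLike.mem_coe, LinearMap.mem_ker, LinearMap.sub_apply,
        LinearMap.comp_apply, LinearMap.mulRight_apply, LinearMap.mulLeft_apply]
      rw [key2 a b, sub_self]
    have h := hle hw
    simp only [LinearMap.mem_ker, LinearMap.sub_apply, LinearMap.comp_apply,
      LinearMap.mulRight_apply, LinearMap.mulLeft_apply, sub_eq_zero] at h
    exact h
  have K4 : ∀ w ∈ H.AA, H.T4 (H.tp v 1 * w) = H.T4 w * H.tp 1 d := by
    intro w hw
    have hle : H.AA ≤ LinearMap.ker
        ((H.T4 ∘ₗ LinearMap.mulLeft ℂ (H.tp v 1)) -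
          (LinearMap.mulRight ℂ (H.tp 1 d) ∘ₗ H.T4)) := by
      rw [H.AA_eq, Submodule.span_le]
      rintro z ⟨a, ha, b, hb, rfl⟩
      simp only [SetLike.mem_coe, LinearMap.mem_ker, LinearMap.sub_apply,
        LinearMap.comp_apply, LinearMap.mulRight_apply, LinearMap.mulLeft_apply]
      rw [key4 a b, sub_self]
    have h := hle hw
    simp only [LinearMap.mem_ker, LinearMap.sub_apply, LinearMap.comp_apply,
      LinearMap.mulRight_apply, LinearMap.mulLeft_apply, sub_eq_zero] at h
    exact h
  intro w hw
  refine ⟨?_, ?_, ?_, ?_⟩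
  · exact sandwich _ (H.tp ui 1) _ (H.tp vi 1) inv_u inv_v _
  · rw [K2 w hw]
    exact sandwich _ (H.tp 1 ci) _ (H.tp vi 1) inv_c inv_v _
  · exact sandwich _ (H.tp ui 1) _ (H.tp vi 1) inv_u inv_v _
  · rw [K4 w hw, ← mul_assoc]
    exact sandwich _ (H.tp ui 1) _ (H.tp 1 di) inv_u inv_d _

end WMHA
end
end

section
/- Let (A,Δ) be a regular weak multiplier Hopf algebra, let u, v be invertible elements of M(B) with E(vu⊗1)E = E, and let Δ'(a) = (u⊗1)Δ(a)(v⊗1). Let (𝒜_B, Δ_B) be the left multiplier bialgebroid over the left quantum graph (B, A, ι_B, S_B) obtained from (A,Δ), and let (𝒜'_C, Δ'_C) be the right multiplier bialgebroid over the right quantum graph (C, A, ι_C, S'_C) obtained from (A,Δ'), where S'_C(y) = uS_C(y)u^{-1}. Then these quantum graphs are compatible and the pair ((𝒜_B,Δ_B), (𝒜'_C,Δ'_C)) forms a regular multiplier Hopf algebroid; in particular the two joint coassociativity identities (Δ_B⊗ι)((1⊗b)Δ'_C(a))(c⊗1⊗1) = (1⊗1⊗b)(ι⊗Δ'_C)(Δ_B(a)(c⊗1))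 and (c⊗1⊗1)(Δ'_C⊗ι)(Δ_B(a)(1⊗b)) = ((ι⊗Δ_B)((c⊗1)Δ'_C(a)))(1⊗1⊗b) hold for all a, b, c ∈ A. -/
noncomputable section
set_option maxHeartbeats 1000000

namespace WMHA

variable {M M2 M3 : Type*} [Ring M] [Algebra ℂ M] [Ring M2] [Algebra ℂ M2]
  [Ring M3] [Algebra ℂ M3]


/-- For invertible `u, v ∈ M(B)` with `E(vu ⊗ 1)E = E`, the
left multiplier bialgebroid `(𝒜_B, Δ_B)` over the left quantum graph
`(B, A, ι_B, S_B)` obtained from `(A, Δ)` and the right multiplier bialgebroid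
`(𝒜'_C, Δ'_C)` over the right quantum graph `(C, A, ι_C, S'_C)` obtained from
`(A, Δ')` (with `S'_C(y) = u S_C(y) u⁻¹`) are compatible and form a regular
multiplier Hopf algebroid; in particular the two joint coassociativity
identities
`(Δ_B ⊗ ι)((1 ⊗ b)Δ'_C(a))(c ⊗ 1 ⊗ 1) = (1 ⊗ 1 ⊗ b)(ι ⊗ Δ'_C)(Δ_B(a)(c ⊗ 1))`
and
`(c ⊗ 1 ⊗ 1)(Δ'_C ⊗ ι)(Δ_B(a)(1 ⊗ b)) = ((ι ⊗ Δ_B)((c ⊗ 1)Δ'_C(a)))(1 ⊗ 1 ⊗ b)`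
hold for all `a, b, c ∈ A`, in the balanced tensor product `A ⊗ₗ A ⊗'ᵣ A`,
i.e. modulo the relations `xa ⊗ b ⊗ c = a ⊗ S_B(x)b ⊗ c` (`x ∈ B`) and
`a ⊗ b S'_C(y) ⊗ c = a ⊗ b ⊗ cy` (`y ∈ C`). -/
theorem statement16 (H : WMHA M M2 M3) (u v ui vi : M)
    (hu : u ∈ H.MB) (hui : ui ∈ H.MB) (hv : v ∈ H.MB) (hvi : vi ∈ H.MB)
    (huui : u * ui = 1) (huiu : ui * u = 1) (hvvi : v * vi = 1) (hviv : vi * v = 1)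
    (hE : H.E * H.tp (v * u) 1 * H.E = H.E) :
    ∀ R : Submodule ℂ M3,
      R = Submodule.span ℂ {z : M3 |
        (∃ x ∈ H.B, ∃ a ∈ H.A, ∃ b ∈ H.A, ∃ c ∈ H.A,
          z = H.tpR (x * a) (H.tp b c) - H.tpR a (H.tp (H.SB x * b) c)) ∨
        (∃ y ∈ H.C, ∃ a ∈ H.A, ∃ b ∈ H.A, ∃ c ∈ H.A,
          z = H.tpR a (H.tp (b * (u * H.SC y * ui)) c) -
            H.tpR a (H.tp b (c * y)))} →
      ∀ a ∈ H.A, ∀ b ∈ H.A, ∀ c ∈ H.A,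
        ((Submodule.Quotient.mk
            (H.Δ12 (H.tp 1 b * (H.tp u 1 * H.Δ a * H.tp v 1)) * H.tpR c 1) :
              M3 ⧸ R) =
          Submodule.Quotient.mk (H.tpR 1 (H.tp 1 b) *
            (H.tpR 1 (H.tp u 1) * H.Δ23 (H.Δ a * H.tp c 1) * H.tpR 1 (H.tp v 1)))) ∧
        ((Submodule.Quotient.mk (H.tpR c 1 *
            (H.tpL (H.tp u 1) 1 * H.Δ12 (H.Δ a * H.tp 1 b) * H.tpL (H.tp v 1) 1)) :
              M3 ⧸ R) =
          Submodule.Quotient.mk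
            (H.Δ23 (H.tp c 1 * (H.tp u 1 * H.Δ a * H.tp v 1)) *
              H.tpR 1 (H.tp 1 b))) := by
  intro R hR a ha b hb c hc
  -- basic multiplicativity / absorption facts
  have hΔu : H.Δ u = H.tp 1 u * H.E := H.Δ_MB' u hu
  have hΔu' : H.Δ u = H.E * H.tp 1 u := H.Δ_MB u hu
  have hΔv : H.Δ v = H.tp 1 v * H.E := H.Δ_MB' v hv
  have hΔv' : H.Δ v = H.E * H.tp 1 v := H.Δ_MB v hv
  have hEE : H.E * H.E = H.E := by rw [← H.Δ_one, ← H.Δ_mul, one_mul]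
  have q1 : H.tp 1 b * H.tp u 1 = H.tp u b := by rw [H.tp_mul, one_mul, mul_one]
  have habs : H.Δ12 1 * H.Δ23 (H.Δ a) = H.Δ23 (H.Δ a) := by
    rw [← H.coassoc, ← H.Δ12_mul, one_mul]
  have habs' : H.Δ23 (H.Δ a) * H.Δ12 1 = H.Δ23 (H.Δ a) := by
    rw [← H.coassoc, ← H.Δ12_mul, mul_one]
  have habsR : H.Δ23 (H.Δ a) * H.Δ23 1 = H.Δ23 (H.Δ a) := by
    rw [← H.Δ23_mul, mul_one]
  have habsRl : H.Δ23 1 * H.Δ23 (H.Δ a) = H.Δ23 (H.Δ a) := by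
    rw [← H.Δ23_mul, one_mul]
  -- splitting lemmas for tpL / tpR
  have split_u : H.tpL (H.tp 1 u) b * H.tpL H.E 1 = H.tpL (H.tp 1 u * H.E) b := by
    rw [H.tpL_mul, mul_one]
  have split_cv : H.tpL H.E 1 * H.tpL (H.tp c v) 1 = H.tpL (H.E * H.tp c v) 1 := by
    rw [H.tpL_mul, one_mul]
  have splitE : H.tpR 1 H.E * H.tpR c (H.tp v 1) = H.tpR c (H.E * H.tp v 1) := by
    rw [H.tpR_mul, one_mul]
  have harg : H.tp 1 v * H.E * H.tp c 1 = H.E * H.tp c v := by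
    rw [← hΔv, hΔv', mul_assoc, H.tp_mul, one_mul, mul_one]
  have htpc : H.tpL (H.tp c 1) 1 = H.tpR c 1 := by rw [H.tpLR, H.tp_one]
  have htpLR_cv : H.tpL (H.tp c v) 1 = H.tpR c (H.tp v 1) := H.tpLR c v 1
  -- common value for the first identity
  have eL1 : H.Δ12 (H.tp 1 b * (H.tp u 1 * H.Δ a * H.tp v 1)) * H.tpR c 1
      = H.tpR 1 (H.tp u b) * (H.Δ23 (H.Δ a) * H.tpR c (H.tp v 1)) := by
    rw [← mul_assoc (H.tp 1 b), ← mul_assoc (H.tp 1 b), q1]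
    rw [H.Δ12_mul, H.Δ12_mul, H.Δ12_tp, H.Δ12_tp, H.coassoc, hΔu, hΔv]
    rw [← split_u, H.tpLR, ← H.Δ12_one]
    rw [mul_assoc (H.tpR 1 (H.tp u b)), habs]
    rw [← htpc, mul_assoc (H.tpR 1 (H.tp u b) * H.Δ23 (H.Δ a)), H.tpL_mul, mul_one,
      harg, ← split_cv, ← H.Δ12_one]
    rw [← mul_assoc (H.tpR 1 (H.tp u b) * H.Δ23 (H.Δ a)),
      mul_assoc (H.tpR 1 (H.tp u b)) (H.Δ23 (H.Δ a)) (H.Δ12 1), habs']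
    rw [htpLR_cv, mul_assoc]
  have eR1 : H.tpR 1 (H.tp 1 b) *
        (H.tpR 1 (H.tp u 1) * H.Δ23 (H.Δ a * H.tp c 1) * H.tpR 1 (H.tp v 1))
      = H.tpR 1 (H.tp u b) * (H.Δ23 (H.Δ a) * H.tpR c (H.tp v 1)) := by
    rw [H.Δ23_mul, H.Δ23_tp, H.Δ_one]
    rw [mul_assoc (H.tpR 1 (H.tp u 1)), mul_assoc (H.Δ23 (H.Δ a)),
      H.tpR_mul, mul_one]
    rw [← splitE, ← H.Δ23_one, ← mul_assoc (H.Δ23 (H.Δ a)), habsR]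
    rw [← mul_assoc, H.tpR_mul, one_mul, q1]
  -- common value for the second identity
  have q2 : H.tp c 1 * H.tp u 1 = H.tp (c * u) 1 := by rw [H.tp_mul, one_mul]
  have htpu : H.tpL (H.tp u 1) 1 = H.tpR u 1 := by rw [H.tpLR, H.tp_one]
  have htpv : H.tpL (H.tp v 1) 1 = H.tpR v 1 := by rw [H.tpLR, H.tp_one]
  have split_vb : H.tpL H.E 1 * H.tpL (H.tp v 1) b = H.tpL (H.E * H.tp v 1) b := by
    rw [H.tpL_mul, one_mul]
  have splitE2 : H.tpR 1 H.E * H.tpR v (H.tp 1 b) = H.tpR v (H.E * H.tp 1 b) := by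
    rw [H.tpR_mul, one_mul]
  have eL2 : H.tpR c 1 *
        (H.tpL (H.tp u 1) 1 * H.Δ12 (H.Δ a * H.tp 1 b) * H.tpL (H.tp v 1) 1)
      = H.tpR (c * u) 1 * (H.Δ23 (H.Δ a) * H.tpR v (H.tp 1 b)) := by
    rw [htpu, H.Δ12_mul, H.Δ12_tp, H.Δ_one, H.coassoc]
    rw [mul_assoc (H.tpR u 1), mul_assoc (H.Δ23 (H.Δ a)), H.tpL_mul, mul_one]
    rw [← split_vb, H.tpLR, ← H.Δ12_one, ← mul_assoc (H.Δ23 (H.Δ a)), habs']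
    rw [← mul_assoc, H.tpR_mul, mul_one]
  have eR2 : H.Δ23 (H.tp c 1 * (H.tp u 1 * H.Δ a * H.tp v 1)) * H.tpR 1 (H.tp 1 b)
      = H.tpR (c * u) 1 * (H.Δ23 (H.Δ a) * H.tpR v (H.tp 1 b)) := by
    rw [← mul_assoc (H.tp c 1), ← mul_assoc (H.tp c 1), q2]
    rw [H.Δ23_mul, H.Δ23_mul, H.Δ23_tp, H.Δ23_tp, H.Δ_one]
    have split_cu : H.tpR (c * u) 1 * H.tpR 1 H.E = H.tpR (c * u) H.E := by
      rw [H.tpR_mul, mul_one, one_mul]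
    rw [← split_cu, ← H.Δ23_one, mul_assoc (H.tpR (c * u) 1), habsRl]
    rw [mul_assoc (H.tpR (c * u) 1 * H.Δ23 (H.Δ a)), H.tpR_mul, mul_one]
    rw [← splitE2, ← H.Δ23_one]
    rw [← mul_assoc, mul_assoc (H.tpR (c * u) 1), habsR, mul_assoc]
  exact ⟨by rw [eL1, eR1], by rw [eL2, eR2]⟩

end WMHA
end
end
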